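/- Let A be a Banach algebra, I a closed two-sided ideal of A with a bounded approximate identity, J a closed two-sided ideal of A, and D̃: A → J* a continuous derivation vanishing on I. Then D̃ takes values in (I ∩ J)⊥ ⊆ J*, i.e., ⟨x, D̃(a)⟩ = 0 for all x ∈ I ∩ J and a ∈ A, and D̃ induces a continuous derivation from A/I into (J/(J ∩ I))*. -/

import Mathlib

open ContinuousLinearMap Filter Topology

namespace Paper

structure Bimod (A : Type*) [NormedRing A] [NormedAlgebra ℂ A]
    (X : Type*) [NormedAddCommGroup X] [NormedSpace ℂ X] where
  l : A → X →L[ℂ] X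
  r : A → X →L[ℂ] X
  l_mul : ∀ a b x, l (a * b) x = l a (l b x)
  r_mul : ∀ a b x, r (a * b) x = r b (r a x)
  lr : ∀ a b x, l a (r b x) = r b (l a x)

variable {A : Type*} [NormedRing A] [NormedAlgebra ℂ A]
variable {X : Type*} [NormedAddCommGroup X] [NormedSpace ℂ X]

noncomputable def Bimod.dual (M : Bimod A X) : Bimod A (X →L[ℂ] ℂ) where
  l a := (compL ℂ X X ℂ).flip (M.r a)
  r a := (compL ℂ X X ℂ).flip (M.l a)
  l_mul a b f := by ext x; simp [M.r_mul]
  r_mul a b f := by ext x; simp [M.l_mul]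
  lr a b f := by ext x; simp [M.lr]

def IsDerivation (M : Bimod A X) (D : A →L[ℂ] X) : Prop :=
  ∀ a b, D (a * b) = M.l a (D b) + M.r b (D a)

def IsInner (M : Bimod A X) (D : A →L[ℂ] X) : Prop :=
  ∃ x, ∀ a, D a = M.l a x - M.r a x

noncomputable def Bimod.restrict (M : Bimod A X) (Y : Submodule ℂ X)
    (hl : ∀ a, ∀ y ∈ Y, M.l a y ∈ Y) (hr : ∀ a, ∀ y ∈ Y, M.r a y ∈ Y) :
    Bimod A Y where
  l a := ((M.l a).comp Y.subtypeL).codRestrict Y fun y => hl a y y.2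
  r a := ((M.r a).comp Y.subtypeL).codRestrict Y fun y => hr a y y.2
  l_mul a b y := Subtype.ext (M.l_mul a b y)
  r_mul a b y := Subtype.ext (M.r_mul a b y)
  lr a b y := Subtype.ext (M.lr a b y)

noncomputable def algBimod (A : Type*) [NormedRing A] [NormedAlgebra ℂ A] : Bimod A A where
  l a := ContinuousLinearMap.mul ℂ A a
  r a := (ContinuousLinearMap.mul ℂ A).flip a
  l_mul a b x := mul_assoc a b x
  r_mul a b x := (mul_assoc x a b).symm
  lr a b x := (mul_assoc a x b).symm

noncomputable def idealBimod (I : Submodule ℂ A)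
    (hL : ∀ a, ∀ x ∈ I, a * x ∈ I) (hR : ∀ a, ∀ x ∈ I, x * a ∈ I) :
    Bimod A I where
  l a := ((ContinuousLinearMap.mul ℂ A a).comp I.subtypeL).codRestrict I fun x => hL a x x.2
  r a := (((ContinuousLinearMap.mul ℂ A).flip a).comp I.subtypeL).codRestrict I fun x => hR a x x.2
  l_mul a b x := Subtype.ext (mul_assoc a b (x : A))
  r_mul a b x := Subtype.ext (mul_assoc (x : A) a b).symm
  lr a b x := Subtype.ext (mul_assoc a (x : A) b).symm

/-! Expanding the derivation identity for `z * a` with `z ∈ I` gives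
`D (z a) y = D a (y z) + D z (a y)`; since `D` vanishes on the right ideal `I`, `D a` kills every
product `y z` with `y ∈ J`, `z ∈ I`. Each `x ∈ I ∩ J` is the limit of the products `x eᵢ` along the
approximate identity, so `D a x = 0` by continuity. Hence each `D a` factors through `J ⧸ (I ∩ J)`,
continuously in `a` because lifting to a quotient does not increase operator norms, and the
resulting map still vanishes on `I`. -/

theorem _root_.Submodule.norm_liftQL_le {𝕜 E F : Type*} [NontriviallyNormedField 𝕜]
    [SeminormedAddCommGroup E] [NormedSpace 𝕜 E] [SeminormedAddCommGroup F] [NormedSpace 𝕜 F]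
    (S : Submodule 𝕜 E) (f : E →L[𝕜] F) (h : S ≤ f.ker) :
    ‖S.liftQL f h‖ ≤ ‖f‖ := by
  let g := (f : E →+ F).mkNormedAddGroupHom ‖f‖ f.le_opNorm
  refine opNorm_le_bound _ (norm_nonneg f) fun x => ?_
  calc ‖S.liftQL f h x‖ ≤ ‖g‖ * ‖x‖ := QuotientAddGroup.norm_lift_apply_le g (fun x hx => h hx) x
    _ ≤ ‖f‖ * ‖x‖ := by
      gcongr
      exact NormedAddGroupHom.mkNormedAddGroupHom_norm_le _ (norm_nonneg f) _

section LiftQLRight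

variable {𝕜 B E F : Type*} [NontriviallyNormedField 𝕜]
  [SeminormedAddCommGroup B] [NormedSpace 𝕜 B]
  [SeminormedAddCommGroup E] [NormedSpace 𝕜 E] [SeminormedAddCommGroup F] [NormedSpace 𝕜 F]
  (S : Submodule 𝕜 E) (D : B →L[𝕜] E →L[𝕜] F) (hD : ∀ b, S ≤ (D b).ker)

noncomputable def _root_.ContinuousLinearMap.liftQLRight : B →L[𝕜] (E ⧸ S) →L[𝕜] F :=
  LinearMap.mkContinuous
    { toFun := fun b => S.liftQL (D b) (hD b)
      map_add' := fun b c => by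
        ext x
        obtain ⟨x, rfl⟩ := S.mkQ_surjective x
        simp
      map_smul' := fun c b => by
        ext x
        obtain ⟨x, rfl⟩ := S.mkQ_surjective x
        simp }
    ‖D‖ fun b => (S.norm_liftQL_le (D b) (hD b)).trans (D.le_opNorm b)

@[simp] theorem _root_.ContinuousLinearMap.liftQLRight_apply_mk (b : B) (x : E) :
    D.liftQLRight S hD b (Submodule.Quotient.mk x) = D b x :=
  rfl

theorem _root_.ContinuousLinearMap.liftQLRight_eq_zero {b : B} (hb : D b = 0) :
    D.liftQLRight S hD b = 0 := by
  ext x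
  obtain ⟨x, rfl⟩ := Submodule.Quotient.mk_surjective S x
  simp [hb]

end LiftQLRight

section IdealDual

variable {I J : Submodule ℂ A} {hJL : ∀ a, ∀ x ∈ J, a * x ∈ J} {hJR : ∀ a, ∀ x ∈ J, x * a ∈ J}
  {D : A →L[ℂ] (J →L[ℂ] ℂ)}

theorem IsDerivation.apply_mul_apply (hD : IsDerivation (idealBimod J hJL hJR).dual D)
    (z a : A) (y : J) :
    D (z * a) y = D a ⟨y * z, hJR z y y.2⟩ + D z ⟨a * y, hJL a y y.2⟩ := by
  rw [hD z a]
  rfl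

theorem IsDerivation.apply_mul_eq_zero (hD : IsDerivation (idealBimod J hJL hJR).dual D)
    (hIR : ∀ a : A, ∀ x ∈ I, x * a ∈ I) (hDI : ∀ x ∈ I, D x = 0)
    (a : A) {z : A} (hz : z ∈ I) (y : J) :
    D a ⟨y * z, hJR z y y.2⟩ = 0 := by
  simpa [hDI z hz, hDI _ (hIR a z hz)] using (hD.apply_mul_apply z a y).symm

theorem IsDerivation.apply_eq_zero_of_tendsto_mul
    (hD : IsDerivation (idealBimod J hJL hJR).dual D)
    (hIR : ∀ a : A, ∀ x ∈ I, x * a ∈ I) (hDI : ∀ x ∈ I, D x = 0)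
    {ι : Type*} {p : Filter ι} [p.NeBot] {e : ι → A} (he : ∀ i, e i ∈ I)
    {x : J} (hx : Tendsto (fun i => (x : A) * e i) p (𝓝 x)) (a : A) :
    D a x = 0 := by
  have hxJ : Tendsto (fun i => (⟨x * e i, hJR (e i) x x.2⟩ : J)) p (𝓝 x) :=
    tendsto_subtype_rng.2 hx
  refine tendsto_nhds_unique ((D a).continuous.tendsto x |>.comp hxJ) ?_
  simpa only [Function.comp_def, hD.apply_mul_eq_zero hIR hDI a (he _)] using tendsto_const_nhds

end IdealDual

theorem stmt_18
    {A : Type*} [NormedRing A] [NormedAlgebra ℂ A]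
    (I J : Submodule ℂ A)
    (hIR : ∀ a : A, ∀ x ∈ I, x * a ∈ I)
    (hJL : ∀ a : A, ∀ x ∈ J, a * x ∈ J) (hJR : ∀ a : A, ∀ x ∈ J, x * a ∈ J)
    -- $I$ has a bounded approximate identity
    (ι : Type*) (p : Filter ι) [p.NeBot] (e : ι → ↥I)
    (hai : ∀ x : ↥I, Tendsto (fun i => (e i : A) * (x : A)) p (𝓝 (x : A)) ∧
                     Tendsto (fun i => (x : A) * (e i : A)) p (𝓝 (x : A)))
    (D : A →L[ℂ] (↥J →L[ℂ] ℂ))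
    (hD : IsDerivation (idealBimod J hJL hJR).dual D)
    (hDI : ∀ x : A, x ∈ I → D x = 0) :
    -- $D$ takes values in $(I ∩ J)^⊥$
    (∀ (a : A) (x : ↥J), (x : A) ∈ I → D a x = 0) ∧
    -- and induces a continuous map $A/I → (J/(J ∩ I))^*$
    ∃ D' : (A ⧸ I) →L[ℂ] ((↥J ⧸ (I.comap J.subtype)) →L[ℂ] ℂ),
      ∀ (a : A) (y : ↥J),
        D' (I.mkQ a) (Submodule.Quotient.mk y) = D a y := by
  have hperp (a : A) (x : J) (hx : (x : A) ∈ I) : D a x = 0 :=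
    hD.apply_eq_zero_of_tendsto_mul hIR hDI (fun i => (e i).2) (hai ⟨x, hx⟩).2 a
  let D₀ := D.liftQLRight (I.comap J.subtype) fun a x hx => hperp a x hx
  exact ⟨hperp, I.liftQL D₀ fun x hx => D.liftQLRight_eq_zero _ _ (hDI x hx), fun a y => rfl⟩

end Paper
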